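/- Uniform-in-(n,p) bound linear in c: fix c ∈ (0,1). For every integer n ≥ 1 such that m := cn is a positive integer and every real p ∈ [0,1], one has ‖Q_{m,n,p} − Uni_n‖_TV ≤ 1 − (1−c)·e^{3c/5}. -/

import Mathlib

/-- `T m n s = C(m-1,s)·(n-s)^(m-s-2)·(s+1)^(s-1)` in `ℝ`, with integer (possibly
negative) exponents interpreted via `zpow`. -/
noncomputable def T (m n s : ℕ) : ℝ :=
  ((m - 1).choose s : ℝ) * ((n : ℝ) - s) ^ ((m : ℤ) - s - 2) * ((s : ℝ) + 1) ^ ((s : ℤ) - 1)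

/-- `Q m n p j` is the conditional probability that the last of `m` cars prefers spot
`j ∈ {1,…,n}` given that all cars park, in the probabilistic parking model on `n` spots
with forward-probability `p` (Theorem 3 of Durmić–Han–Harris–Ribeiro–Yin):
`Q_{m,n,p}(j) = (n-m+2)/((n-m+1)(n+1)) − (1/(n+1)^(m-1))·
  [ p·Σ_{s=n-j+1}^{m-1} T(s) + (1-p)·Σ_{s=j}^{m-1} T(s) ]`. -/
noncomputable def Q (m n : ℕ) (p : ℝ) (j : ℕ) : ℝ :=
  ((n : ℝ) - m + 2) / (((n : ℝ) - m + 1) * ((n : ℝ) + 1)) -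
    1 / ((n : ℝ) + 1) ^ (m - 1) *
      (p * ∑ s ∈ Finset.Icc (n - j + 1) (m - 1), T m n s +
        (1 - p) * ∑ s ∈ Finset.Icc j (m - 1), T m n s)

/-- Total variation distance between `Q m n p` and the uniform distribution on `{1,…,n}`:
`(1/2)·Σ_{j=1}^n |Q_{m,n,p}(j) − 1/n|`. -/
noncomputable def tvUni (m n : ℕ) (p : ℝ) : ℝ :=
  1 / 2 * ∑ j ∈ Finset.Icc 1 n, |Q m n p j - 1 / (n : ℝ)|

/-!
Since every `T m n s` is nonnegative, each `Q m n p j` lies below the constant term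
`qMax m n` of its formula, so `2 · tvUni ≤ ∑ⱼ (qMax - Q j) + n (qMax - 1/n)`. Exchanging the
order of summation, the first sum is `(n+1)^{-(m-1)} ∑ₛ s T(s)`, which Abel's identity
`∑ₖ C(N,k) x (x+k)^{k-1} (y-k)^{N-k} = (x+y)^N` evaluates to `(m-1)/((n-m+1)(n+1))`; the second
sum has the same value. Finally, with `c = m/n`,
`(m-1)/((n-m+1)(n+1)) ≤ 2c/(5-3c) = 1 - (1-c)/(1-3c/5) ≤ 1 - (1-c) e^{3c/5}`.
-/
open Finset

theorem sum_neg_one_pow_mul_choose_mul_add_pow_eq_zero {R : Type*} [CommRing R] {N j : ℕ}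
    (h : j < N) (x : R) :
    ∑ k ∈ range (N + 1), (-1 : R) ^ (N - k) * N.choose k * (x + k) ^ j = 0 := by
  have := congr_fun (fwdDiff_iter_pow_eq_zero_of_lt (R := R) h) x
  rw [fwdDiff_iter_eq_sum_shift] at this
  simpa [zsmul_eq_mul] using this

-- The `k = 0` term `x · x⁻¹ · y ^ N` of Abel's sum is written as `y ^ N`.
noncomputable def abelSum (N : ℕ) (x y : ℝ) : ℝ :=
  y ^ N + ∑ k ∈ Icc 1 N, N.choose k * x * (x + k) ^ (k - 1) * (y - k) ^ (N - k)

theorem hasDerivAt_abelSum (N : ℕ) (x y : ℝ) :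
    HasDerivAt (abelSum (N + 1) x) ((N + 1) * abelSum N x y) y := by
  have hterm : ∀ k ∈ Icc 1 (N + 1), HasDerivAt
      (fun y => ((N + 1).choose k : ℝ) * x * (x + k) ^ (k - 1) * (y - k) ^ (N + 1 - k))
      ((N + 1) * (N.choose k * x * (x + k) ^ (k - 1) * (y - k) ^ (N - k))) y := by
    intro k _
    refine ((((hasDerivAt_id y).sub_const (k : ℝ)).pow (N + 1 - k)).const_mul
      (((N + 1).choose k : ℝ) * x * (x + k) ^ (k - 1))).congr_deriv ?_
    have hchoose : (N.choose k * (N + 1) : ℝ) = (N + 1).choose k * (N + 1 - k : ℕ) := by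
      exact_mod_cast Nat.choose_mul_succ_eq N k
    rw [show N + 1 - k - 1 = N - k by omega, id, mul_one]
    linear_combination (x * (x + k) ^ (k - 1) * (y - k) ^ (N - k)) * hchoose.symm
  have hsum := HasDerivAt.fun_sum hterm
  rw [sum_Icc_succ_top (by omega), Nat.choose_succ_self] at hsum
  simp only [Nat.cast_zero, zero_mul, mul_zero, add_zero, ← mul_sum] at hsum
  refine ((hasDerivAt_pow (N + 1) y).fun_add hsum).congr_deriv ?_
  rw [abelSum]
  push_cast
  ring

-- At `y = -x` the sum is `x` times an `(N+1)`-st finite difference of `(x + ·) ^ N`.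
theorem abelSum_neg (N : ℕ) (x : ℝ) : abelSum (N + 1) x (-x) = 0 := by
  have hfd := sum_neg_one_pow_mul_choose_mul_add_pow_eq_zero (N := N + 1) (Nat.lt_succ_self N) x
  rw [range_eq_Ico, sum_eq_sum_Ico_succ_bot (by omega), Ico_add_one_right_eq_Icc] at hfd
  rw [abelSum, ← mul_zero x, ← hfd, mul_add, mul_sum]
  congr 1
  · simp only [Nat.sub_zero, Nat.choose_zero_right, Nat.cast_zero, Nat.cast_one, add_zero,
      mul_one, neg_pow x]
    ring
  · refine sum_congr rfl fun k hk => ?_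
    have hk : 1 ≤ k ∧ k ≤ N + 1 := mem_Icc.mp hk
    have hpow : (x + k) ^ N = (x + k) ^ (k - 1) * (x + k) ^ (N + 1 - k) := by
      rw [← pow_add]; congr 1; omega
    rw [show -x - k = -1 * (x + k) by ring, mul_pow, hpow]
    ring

theorem abelSum_eq (N : ℕ) (x y : ℝ) : abelSum N x y = (x + y) ^ N := by
  induction N generalizing y with
  | zero => simp [abelSum]
  | succ N ih =>
    have hderiv : ∀ z, HasDerivAt (fun z => abelSum (N + 1) x z - (x + z) ^ (N + 1)) 0 z := by
      intro z
      refine ((hasDerivAt_abelSum N x z).sub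
        (((hasDerivAt_id z).const_add x).pow (N + 1))).congr_deriv ?_
      rw [ih]; simp
    have hconst := is_const_of_deriv_eq_zero (fun z => (hderiv z).differentiableAt)
      (fun z => (hderiv z).deriv) y (-x)
    simp only [abelSum_neg, add_neg_cancel] at hconst
    simpa [sub_eq_zero] using hconst

theorem T_eq_pow {N s : ℕ} (n : ℕ) (hs1 : 1 ≤ s) (hsN : s ≤ N) :
    T (N + 2) n s = (N + 1).choose s * ((n : ℝ) - s) ^ (N - s) * ((s : ℝ) + 1) ^ (s - 1) := by
  have e1 : ((N + 2 : ℕ) : ℤ) - s - 2 = ((N - s : ℕ) : ℤ) := by omega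
  have e2 : (s : ℤ) - 1 = ((s - 1 : ℕ) : ℤ) := by omega
  rw [T, e1, e2, zpow_natCast, zpow_natCast, show N + 2 - 1 = N + 1 from rfl]

theorem T_top (N n : ℕ) : T (N + 2) n (N + 1) = ((n : ℝ) - (N + 1))⁻¹ * (N + 2) ^ N := by
  have e1 : ((N + 2 : ℕ) : ℤ) - (N + 1 : ℕ) - 2 = -1 := by omega
  have e2 : ((N + 1 : ℕ) : ℤ) - 1 = (N : ℕ) := by omega
  rw [T, e1, e2, zpow_neg_one, zpow_natCast, show N + 2 - 1 = N + 1 from rfl, Nat.choose_self]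
  push_cast
  ring

theorem T_nonneg (m : ℕ) {n s : ℕ} (hs : s < n) : 0 ≤ T m n s := by
  have : (0 : ℝ) < n - s := sub_pos.mpr (by exact_mod_cast hs)
  unfold T
  positivity

theorem mul_add_one_choose_eq_add_one_mul_choose_sub {N s : ℕ} (hs1 : 1 ≤ s) (hsN : s ≤ N + 1) :
    s * (N + 1).choose s = (N + 1) * N.choose (N + 1 - s) := by
  obtain ⟨t, rfl⟩ := Nat.exists_eq_add_of_le' hs1
  rw [Nat.choose_symm_of_eq_add (show N = (N + 1 - (t + 1)) + t by omega),
    Nat.add_one_mul_choose_eq, mul_comm]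

theorem sum_mul_T_add_two {N n : ℕ} (hn : N + 2 ≤ n) :
    ∑ s ∈ Icc 1 (N + 1), (s : ℝ) * T (N + 2) n s = (N + 1) * (n + 1) ^ N / (n - (N + 1)) := by
  set x : ℝ := n - (N + 1) with hx
  have hx0 : 0 < x := by
    have : ((N + 2 : ℕ) : ℝ) ≤ n := by exact_mod_cast hn
    push_cast at this
    linarith
  have habel := abelSum_eq N x (N + 2)
  rw [show x + (N + 2) = n + 1 by ring, abelSum] at habel
  -- `k = N + 1 - s` matches `s * T (N + 2) n s` with the `k`-th term of `abelSum N x (N + 2)`.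
  have hreflect : ∑ s ∈ Icc 1 N, (s : ℝ) * T (N + 2) n s = (N + 1) / x *
      ∑ k ∈ Icc 1 N, N.choose k * x * (x + k) ^ (k - 1) * ((N + 2 : ℝ) - k) ^ (N - k) := by
    rw [mul_sum]
    refine sum_nbij' (fun s => N + 1 - s) (fun k => N + 1 - k) ?_ ?_ ?_ ?_ ?_ <;>
      simp only [mem_Icc] <;> try omega
    intro s ⟨hs1, hsN⟩
    have hchoose : (s * (N + 1).choose s : ℝ) = (N + 1) * N.choose (N + 1 - s) := by
      exact_mod_cast mul_add_one_choose_eq_add_one_mul_choose_sub hs1 (by omega)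
    have hcast : ((N + 1 - s : ℕ) : ℝ) = N + 1 - s := by
      rw [Nat.cast_sub (by omega)]; push_cast; ring
    rw [T_eq_pow n hs1 hsN, hcast, show N + 1 - s - 1 = N - s by omega,
      show N - (N + 1 - s) = s - 1 by omega, show x + (N + 1 - s) = n - s by rw [hx]; ring,
      show (N + 2 : ℝ) - (N + 1 - s) = s + 1 by ring]
    have hcancel : (N + 1 : ℝ) / x * x = N + 1 := div_mul_cancel₀ _ hx0.ne'
    linear_combination ((n - s : ℝ) ^ (N - s) * ((s : ℝ) + 1) ^ (s - 1)) * hchoose -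
      (N.choose (N + 1 - s) * (n - s : ℝ) ^ (N - s) * ((s : ℝ) + 1) ^ (s - 1)) * hcancel
  rw [sum_Icc_succ_top (by omega), hreflect, T_top, ← hx, ← habel]
  push_cast
  ring

theorem sum_mul_T_div_pow {m n : ℕ} (hm : 1 ≤ m) (hmn : m ≤ n) :
    (∑ s ∈ Icc 1 (m - 1), (s : ℝ) * T m n s) / ((n : ℝ) + 1) ^ (m - 1) =
      ((m : ℝ) - 1) / (((n : ℝ) - m + 1) * ((n : ℝ) + 1)) := by
  obtain rfl | hm2 := hm.eq_or_lt
  · simp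
  obtain ⟨N, rfl⟩ := Nat.exists_eq_add_of_le' (show 2 ≤ m from hm2)
  have hx : (0 : ℝ) < n - (N + 1) := by
    have : ((N + 2 : ℕ) : ℝ) ≤ n := by exact_mod_cast hmn
    push_cast at this
    linarith
  rw [show N + 2 - 1 = N + 1 from rfl, sum_mul_T_add_two hmn, pow_succ]
  push_cast
  rw [show (n : ℝ) - (N + 2) + 1 = n - (N + 1) by ring]
  field_simp
  ring

theorem sum_Icc_sum_Icc_eq_sum_nsmul {M : Type*} [AddCommMonoid M] {K n : ℕ} (hK : K ≤ n)
    (f : ℕ → M) : ∑ j ∈ Icc 1 n, ∑ s ∈ Icc j K, f s = ∑ s ∈ Icc 1 K, s • f s := by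
  rw [sum_comm' (t' := Icc 1 K) (s' := fun s => Icc 1 s)
    (by intro j s; simp only [mem_Icc]; omega)]
  simp

theorem sum_Icc_sum_Icc_sub_eq_sum_nsmul {M : Type*} [AddCommMonoid M] {K n : ℕ} (hK : K ≤ n)
    (f : ℕ → M) : ∑ j ∈ Icc 1 n, ∑ s ∈ Icc (n - j + 1) K, f s = ∑ s ∈ Icc 1 K, s • f s := by
  rw [sum_comm' (t' := Icc 1 K) (s' := fun s => Icc (n + 1 - s) n)
    (by intro j s; simp only [mem_Icc]; omega)]
  refine sum_congr rfl fun s hs => ?_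
  rw [sum_const, Nat.card_Icc, show n + 1 - (n + 1 - s) = s by simp at hs; omega]

noncomputable def qMax (m n : ℕ) : ℝ :=
  ((n : ℝ) - m + 2) / (((n : ℝ) - m + 1) * ((n : ℝ) + 1))

theorem qMax_sub_Q (m n : ℕ) (p : ℝ) (j : ℕ) : qMax m n - Q m n p j =
    1 / ((n : ℝ) + 1) ^ (m - 1) * (p * ∑ s ∈ Icc (n - j + 1) (m - 1), T m n s +
      (1 - p) * ∑ s ∈ Icc j (m - 1), T m n s) := by
  rw [qMax, Q]
  ring

theorem Q_le_qMax {m n : ℕ} {p : ℝ} (hm : 1 ≤ m) (hmn : m ≤ n) (hp0 : 0 ≤ p) (hp1 : p ≤ 1)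
    (j : ℕ) : Q m n p j ≤ qMax m n := by
  have hT : ∀ i, 0 ≤ ∑ s ∈ Icc i (m - 1), T m n s := fun i =>
    sum_nonneg fun s hs => T_nonneg m (by simp only [mem_Icc] at hs; omega)
  rw [← sub_nonneg, qMax_sub_Q]
  exact mul_nonneg (by positivity)
    (add_nonneg (mul_nonneg hp0 (hT _)) (mul_nonneg (sub_nonneg.mpr hp1) (hT _)))

theorem sum_qMax_sub_Q {m n : ℕ} (hm : 1 ≤ m) (hmn : m ≤ n) (p : ℝ) :
    ∑ j ∈ Icc 1 n, (qMax m n - Q m n p j) =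
      ((m : ℝ) - 1) / (((n : ℝ) - m + 1) * ((n : ℝ) + 1)) := by
  simp_rw [qMax_sub_Q, ← mul_sum, sum_add_distrib, ← mul_sum,
    sum_Icc_sum_Icc_sub_eq_sum_nsmul (show m - 1 ≤ n by omega),
    sum_Icc_sum_Icc_eq_sum_nsmul (show m - 1 ≤ n by omega), nsmul_eq_mul,
    ← sum_mul_T_div_pow hm hmn]
  ring

theorem mul_qMax_sub_one_div {m n : ℕ} (hmn : m ≤ n) (hn : 1 ≤ n) :
    n * (qMax m n - 1 / n) = ((m : ℝ) - 1) / (((n : ℝ) - m + 1) * ((n : ℝ) + 1)) := by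
  have : (m : ℝ) ≤ n := by exact_mod_cast hmn
  have : (0 : ℝ) < n := by exact_mod_cast hn
  have : (0 : ℝ) < n - m + 1 := by linarith
  rw [qMax]
  field_simp
  ring

theorem tvUni_le {m n : ℕ} {p : ℝ} (hm : 1 ≤ m) (hmn : m ≤ n) (hp0 : 0 ≤ p) (hp1 : p ≤ 1) :
    tvUni m n p ≤ ((m : ℝ) - 1) / (((n : ℝ) - m + 1) * ((n : ℝ) + 1)) := by
  have hn : 1 ≤ n := hm.trans hmn
  have hinv : 1 / (n : ℝ) ≤ qMax m n := by
    have hm' : (1 : ℝ) ≤ m := by exact_mod_cast hm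
    have hmn' : (m : ℝ) ≤ n := by exact_mod_cast hmn
    rw [qMax, div_le_div_iff₀ (by positivity) (by positivity)]
    nlinarith
  have hterm : ∀ j ∈ Icc 1 n,
      |Q m n p j - 1 / n| ≤ (qMax m n - Q m n p j) + (qMax m n - 1 / n) := fun j _ => by
    have := Q_le_qMax hm hmn hp0 hp1 j
    rw [abs_le]
    constructor <;> linarith
  calc tvUni m n p ≤ 1 / 2 * ∑ j ∈ Icc 1 n, ((qMax m n - Q m n p j) + (qMax m n - 1 / n)) :=
        mul_le_mul_of_nonneg_left (sum_le_sum hterm) (by norm_num)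
    _ = _ := by
      rw [sum_add_distrib, sum_qMax_sub_Q hm hmn, sum_const, Nat.card_Icc, nsmul_eq_mul,
        Nat.add_sub_cancel, mul_qMax_sub_one_div hmn hn]
      ring

theorem sub_one_div_le_two_mul_div {c n : ℝ} (hn : 0 < n) (hc0 : 0 ≤ c) (hc1 : c ≤ 1) :
    (c * n - 1) / ((n - c * n + 1) * (n + 1)) ≤ 2 * c / (5 - 3 * c) := by
  have : 0 ≤ n - c * n := by nlinarith
  rw [div_le_div_iff₀ (by positivity) (by linarith)]
  nlinarith [mul_nonneg hc0 this, mul_nonneg (mul_nonneg hc0 this) hn.le, mul_nonneg hc0 hn.le]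

theorem two_mul_div_le_one_sub_mul_exp {c : ℝ} (hc0 : 0 ≤ c) (hc1 : c ≤ 1) :
    2 * c / (5 - 3 * c) ≤ 1 - (1 - c) * Real.exp (3 * c / 5) := by
  have hexp := Real.exp_bound_div_one_sub_of_interval (x := 3 * c / 5) (by positivity) (by linarith)
  have h5 : 5 - 3 * c ≠ 0 := by linarith
  calc 2 * c / (5 - 3 * c) = 1 - (1 - c) * (1 / (1 - 3 * c / 5)) := by
        rw [show 1 - 3 * c / 5 = (5 - 3 * c) / 5 by ring, one_div_div, ← mul_div_assoc,
          eq_sub_iff_add_eq, ← add_div, div_eq_one_iff_eq h5]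
        ring
    _ ≤ 1 - (1 - c) * Real.exp (3 * c / 5) := by gcongr

theorem tv_uniform_bound_linear_in_c_general (c : ℝ) (hc1 : c < 1) :
    ∀ n : ℕ, 1 ≤ n → ∀ m : ℕ, 1 ≤ m → (m : ℝ) = c * n →
      ∀ p : ℝ, 0 ≤ p → p ≤ 1 →
        tvUni m n p ≤ 1 - (1 - c) * Real.exp (3 * c / 5) := by
  intro n hn m hm hmc p hp0 hp1
  have hn0 : (0 : ℝ) < n := by exact_mod_cast hn
  have hc0 : 0 ≤ c := nonneg_of_mul_nonneg_left (hmc ▸ m.cast_nonneg) hn0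
  have hmn : m ≤ n := by exact_mod_cast (show (m : ℝ) ≤ n by nlinarith)
  calc tvUni m n p ≤ ((m : ℝ) - 1) / (((n : ℝ) - m + 1) * ((n : ℝ) + 1)) :=
        tvUni_le hm hmn hp0 hp1
    _ ≤ 2 * c / (5 - 3 * c) := hmc ▸ sub_one_div_le_two_mul_div hn0 hc0 hc1.le
    _ ≤ 1 - (1 - c) * Real.exp (3 * c / 5) := two_mul_div_le_one_sub_mul_exp hc0 hc1.le

/-- Uniform-in-`(n,p)` bound linear in `c`: fix `c ∈ (0,1)`. For every `n ≥ 1` such that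
`m := cn` is a positive integer and every `p ∈ [0,1]`,
`‖Q_{m,n,p} − Uni_n‖_TV ≤ 1 − (1−c)·e^(3c/5)`. -/
theorem tv_uniform_bound_linear_in_c (c : ℝ) (hc : 0 < c) (hc1 : c < 1) :
    ∀ n : ℕ, 1 ≤ n → ∀ m : ℕ, 1 ≤ m → (m : ℝ) = c * n →
      ∀ p : ℝ, 0 ≤ p → p ≤ 1 →
        tvUni m n p ≤ 1 - (1 - c) * Real.exp (3 * c / 5) :=
  tv_uniform_bound_linear_in_c_general c hc1
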